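/- arXiv:2202.13870 — 3 statements merged into one kernel-verified Lean document; each statement's English description precedes it below -/
import Mathlib

section
/- In the single-bottleneck RBU model, assume c u ∈ [0,1] for all u ≥ 1, s u ≥ d_trans for all u ≥ 1, and d_trans ≤ τ. Then for any packets t < t', if d t ≤ τ (i.e., packet t is not dropped), then T t + y t < T t' + y t'; that is, packets are delivered in order at the receiver. -/
/-!
Once a packet is not dropped, every later packet is not dropped either: the accrued delay is
at most `d_trans + (τ - d_trans)`, and the cross-traffic step moves it towards `τ` without
passing it. Moreover the accrued delay of packet `u + 1` is at least
`d_trans + d u - s (u + 1)`, so its arrival time exceeds that of packet `u` by at least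
`d_trans > 0`. Hence arrival times are strictly increasing from the first undropped packet on.
-/

open Set

theorem add_mul_sub_mem_Icc {a b c : ℝ} (hab : a ≤ b) (hc : c ∈ Icc (0 : ℝ) 1) :
    a + c * (b - a) ∈ Icc a b :=
  (convex_Icc a b).add_smul_sub_mem (left_mem_Icc.2 hab) (right_mem_Icc.2 hab) hc

theorem accrued_delay_mem_Icc {d_trans τ prev s : ℝ} (hprev : prev ≤ τ) (hs : d_trans ≤ s)
    (hτ : d_trans ≤ τ) : d_trans + max (prev - s) 0 ∈ Icc (d_trans + (prev - s)) τ := by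
  refine ⟨by gcongr; exact le_max_left _ _, ?_⟩
  have : max (prev - s) 0 ≤ τ - d_trans := max_le (by linarith) (by linarith)
  linarith

theorem bottleneck_delay_mem_Icc {d_trans τ prev s c : ℝ} (hprev : prev ≤ τ) (hs : d_trans ≤ s)
    (hτ : d_trans ≤ τ) (hc : c ∈ Icc (0 : ℝ) 1) :
    d_trans + max (prev - s) 0 + c * (τ - (d_trans + max (prev - s) 0)) ∈
      Icc (d_trans + (prev - s)) τ :=
  have hacc := accrued_delay_mem_Icc hprev hs hτ
  Icc_subset_Icc_left hacc.1 (add_mul_sub_mem_Icc hacc.2 hc)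

theorem strictMonoOn_Ici_add_of_delay_step {δ τ : ℝ} (hδ : 0 < δ) {s d T : ℕ → ℝ}
    (hT : ∀ u, T (u + 1) = T u + s (u + 1))
    (hstep : ∀ u, d u ≤ τ → d (u + 1) ∈ Icc (δ + (d u - s (u + 1))) τ)
    {t : ℕ} (ht : d t ≤ τ) : StrictMonoOn (fun u ↦ T u + d u) (Ici t) := by
  have hle : ∀ u ∈ Ici t, d u ≤ τ := fun u hu ↦
    Nat.le_induction ht (fun v _ hv ↦ (hstep v hv).2) u hu
  refine strictMonoOn_of_lt_add_one ordConnected_Ici fun u _ hu _ ↦ ?_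
  have hlower := (hstep u (hle u hu)).1
  simp only [hT]
  linarith

theorem rbu_in_order_delivery_general
    (d_trans d_prop τ : ℝ)
    (hdtrans : 0 < d_trans)
    (s c a d T y : ℕ → ℝ)
    (ha : ∀ t, 1 ≤ t → a t = d_trans + max (d (t - 1) - s t) 0)
    (hd : ∀ t, 1 ≤ t → d t = a t + c t * (τ - a t))
    (hT : ∀ t, T t = ∑ i ∈ Finset.Icc 1 t, s i)
    (hy : ∀ t, y t = d t + d_prop)
    (hc : ∀ u, 1 ≤ u → c u ∈ Set.Icc (0 : ℝ) 1)
    (hs_trans : ∀ u, 1 ≤ u → d_trans ≤ s u)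
    (hτ_trans : d_trans ≤ τ)
    (t t' : ℕ) (htt' : t < t') (hnodrop : d t ≤ τ) :
    T t + y t < T t' + y t' := by
  have hT_succ : ∀ u, T (u + 1) = T u + s (u + 1) := fun u ↦ by
    rw [hT, hT, Finset.sum_Icc_succ_top (Nat.le_add_left 1 u)]
  have hstep : ∀ u, d u ≤ τ → d (u + 1) ∈ Icc (d_trans + (d u - s (u + 1))) τ := by
    intro u hu
    have hsucc : 1 ≤ u + 1 := Nat.le_add_left 1 u
    rw [hd _ hsucc, ha _ hsucc, Nat.add_sub_cancel]
    exact bottleneck_delay_mem_Icc hu (hs_trans _ hsucc) hτ_trans (hc _ hsucc)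
  have harrival := strictMonoOn_Ici_add_of_delay_step hdtrans hT_succ hstep hnodrop
    self_mem_Ici (mem_Ici.2 htt'.le) htt'
  simp only [hy]
  linarith

/-- **Single-bottleneck RBU, in-order delivery (Proposition 1).**
Assume `c u ∈ [0,1]` for all `u ≥ 1`, `s u ≥ d_trans` for all `u ≥ 1`, and
`d_trans ≤ τ`. Then for packets `t < t'`, if `d t ≤ τ` (packet `t` not dropped),
the receiver arrival times satisfy `T t + y t < T t' + y t'`. -/
theorem rbu_in_order_delivery
    (d_trans d_prop τ : ℝ)
    (hdtrans : 0 < d_trans) (hdprop : 0 < d_prop) (hτ : 0 < τ)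
    (s c a d T y : ℕ → ℝ)
    (hs_pos : ∀ t, 1 ≤ t → 0 < s t)
    (ha : ∀ t, 1 ≤ t → a t = d_trans + max (d (t - 1) - s t) 0)
    (hd : ∀ t, 1 ≤ t → d t = a t + c t * (τ - a t))
    (hT : ∀ t, T t = ∑ i ∈ Finset.Icc 1 t, s i)
    (hy : ∀ t, y t = d t + d_prop)
    (hc : ∀ u, 1 ≤ u → c u ∈ Set.Icc (0 : ℝ) 1)
    (hs_trans : ∀ u, 1 ≤ u → d_trans ≤ s u)
    (hτ_trans : d_trans ≤ τ)
    (t t' : ℕ) (htt' : t < t') (hnodrop : d t ≤ τ) :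
    T t + y t < T t' + y t' :=
  rbu_in_order_delivery_general d_trans d_prop τ hdtrans s c a d T y ha hd hT hy hc hs_trans
    hτ_trans t t' htt' hnodrop
end

section
/- In the single-bottleneck RBU model, for any t ≥ 1, if c t ∈ [0,1] and d (t-1) ≤ τ (packet t-1 is not dropped), then s t + d t > d (t-1); that is, even without any assumption relating s t to d_trans, packet t arrives at the receiver strictly after packet t-1 whenever packet t-1 is not dropped. -/
/-!
The bottleneck delay `d t` is a convex combination of the accrued delay `a t` and the threshold
`τ`, so it is at least one of the two. Adding the spacing `s t` to either one overshoots
`d (t - 1)`: `s t + a t = d_trans + max (d (t - 1)) (s t)`, and `s t + τ > τ ≥ d (t - 1)`.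
-/

theorem min_le_add_mul_sub {α : Type*} [Field α] [LinearOrder α] [IsStrictOrderedRing α]
    {x y c : α} (hc : c ∈ Set.Icc 0 1) : min x y ≤ x + c * (y - x) := by
  convert Convex.min_le_combo x y (sub_nonneg.2 hc.2) hc.1 (sub_add_cancel 1 c) using 1
  simp only [smul_eq_mul]
  ring

theorem rbu_one_step_order_no_spacing_assumption_general
    (d_trans τ : ℝ)
    (hdtrans : 0 < d_trans)
    (s c a d : ℕ → ℝ)
    (hs_pos : ∀ t, 1 ≤ t → 0 < s t)
    (ha : ∀ t, 1 ≤ t → a t = d_trans + max (d (t - 1) - s t) 0)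
    (hd : ∀ t, 1 ≤ t → d t = a t + c t * (τ - a t))
    (t : ℕ) (ht : 1 ≤ t)
    (hc : c t ∈ Set.Icc (0 : ℝ) 1)
    (hprev : d (t - 1) ≤ τ) :
    s t + d t > d (t - 1) := by
  have h_accrued : d (t - 1) < s t + a t := by
    rw [ha t ht]
    linarith [le_max_left (d (t - 1) - s t) 0]
  have h_threshold : d (t - 1) < s t + τ := by linarith [hs_pos t ht]
  have h_combo : min (a t) τ ≤ d t := hd t ht ▸ min_le_add_mul_sub hc
  rcases min_le_iff.mp h_combo with h | h <;> linarith

theorem rbu_one_step_order_no_spacing_assumption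
    (d_trans d_prop τ : ℝ)
    (hdtrans : 0 < d_trans) (hdprop : 0 < d_prop) (hτ : 0 < τ)
    (s c a d T y : ℕ → ℝ)
    (hs_pos : ∀ t, 1 ≤ t → 0 < s t)
    (ha : ∀ t, 1 ≤ t → a t = d_trans + max (d (t - 1) - s t) 0)
    (hd : ∀ t, 1 ≤ t → d t = a t + c t * (τ - a t))
    (hT : ∀ t, T t = ∑ i ∈ Finset.Icc 1 t, s i)
    (hy : ∀ t, y t = d t + d_prop)
    (t : ℕ) (ht : 1 ≤ t)
    (hc : c t ∈ Set.Icc (0 : ℝ) 1)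
    (hprev : d (t - 1) ≤ τ) :
    s t + d t > d (t - 1) :=
  rbu_one_step_order_no_spacing_assumption_general d_trans τ hdtrans s c a d hs_pos ha hd t ht hc
    hprev
end

section
/- In the multi-path RBU model, packets routed through the same queue are delivered in order: let k be a queue and let t < t' be packets with r(t) = r(t') = k. Assume c u ∈ [0,1] for all u ≥ 1, s u ≥ d_trans^(k) for all u ≥ 1, and d_trans^(k) ≤ τ^(k). If d^(k) t ≤ τ^(k) (packet t is not dropped from queue k), then T t + y t < T t' + y t'. -/
/-!
Fix the queue `k` and let `D u = T u - sq k u + dq k u`. Since `T u - sq k u` is the send time of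
the last packet routed to `k` up to time `u`, `D u` is the time at which that packet leaves the
queue. Packets routed elsewhere leave `D` unchanged, and a packet routed to `k` raises it by at
least `d_trans^(k)`: the max in the recurrence accounts for waiting behind the previous packet, and
the cross-traffic term can only increase the delay as long as it stays below `τ^(k)`, which is
preserved from packet `t` on precisely because `t` is not dropped. Hence the arrival time of `t'`
at the receiver exceeds that of `t` by at least `d_trans^(k) > 0`.
-/

open Finset

namespace RBU

def sendTime (s : ℕ → ℝ) (t : ℕ) : ℝ := ∑ i ∈ Icc 1 t, s i

theorem sendTime_succ (s : ℕ → ℝ) (n : ℕ) : sendTime s (n + 1) = sendTime s n + s (n + 1) :=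
  sum_Icc_succ_top (Nat.le_add_left 1 n) s

/-- The delay `a` of a packet that is sent `e` after the previous one, which had delay `d`. -/
def transmitDelay (δ d e : ℝ) : ℝ := δ + max (d - e) 0

def crossTrafficDelay (τ c a : ℝ) : ℝ := a + c * (τ - a)

theorem add_sub_le_transmitDelay (δ d e : ℝ) : δ + (d - e) ≤ transmitDelay δ d e :=
  (add_le_add_iff_left δ).mpr (le_max_left _ _)

theorem transmitDelay_le {δ τ d e : ℝ} (hd : d ≤ τ) (he : δ ≤ e) (hδ : δ ≤ τ) :
    transmitDelay δ d e ≤ τ := by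
  unfold transmitDelay
  rcases le_total (d - e) 0 with h | h
  · rw [max_eq_right h]; linarith
  · rw [max_eq_left h]; linarith

theorem le_crossTrafficDelay {τ c a : ℝ} (ha : a ≤ τ) (hc : 0 ≤ c) :
    a ≤ crossTrafficDelay τ c a :=
  le_add_of_nonneg_right (mul_nonneg hc (sub_nonneg.mpr ha))

theorem crossTrafficDelay_le {τ c a : ℝ} (ha : a ≤ τ) (hc : c ≤ 1) :
    crossTrafficDelay τ c a ≤ τ := by
  have : c * (τ - a) ≤ τ - a := mul_le_of_le_one_left (sub_nonneg.mpr ha) hc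
  unfold crossTrafficDelay
  linarith

/-- One queue of the RBU model: `e u` is the time elapsed since the last packet routed to it was
sent and `d u` is that packet's delay. -/
structure IsQueue (δ τ : ℝ) (s c : ℕ → ℝ) (routed : ℕ → Prop) (e d : ℕ → ℝ) : Prop where
  reset : ∀ n, routed (n + 1) → e (n + 1) = 0
  update : ∀ n, routed (n + 1) →
    d (n + 1) = crossTrafficDelay τ (c (n + 1)) (transmitDelay δ (d n) (e n + s (n + 1)))
  accumulate : ∀ n, ¬ routed (n + 1) → e (n + 1) = e n + s (n + 1)
  hold : ∀ n, ¬ routed (n + 1) → d (n + 1) = d n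

def departure (s e d : ℕ → ℝ) (u : ℕ) : ℝ := sendTime s u - e u + d u

namespace IsQueue

variable {δ τ : ℝ} {s c : ℕ → ℝ} {routed : ℕ → Prop} {e d : ℕ → ℝ}

theorem delay_bounds_of_routed (hq : IsQueue δ τ s c routed e d) (hc : ∀ n, c (n + 1) ∈ Set.Icc 0 1)
    (hs : ∀ n, δ ≤ s (n + 1)) (hδτ : δ ≤ τ) {n : ℕ} (hn : routed (n + 1)) (hd : d n ≤ τ)
    (he : 0 ≤ e n) :
    δ + (d n - (e n + s (n + 1))) ≤ d (n + 1) ∧ d (n + 1) ≤ τ := by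
  have ha := transmitDelay_le hd (le_add_of_nonneg_of_le he (hs n)) hδτ
  rw [hq.update n hn]
  exact ⟨(add_sub_le_transmitDelay _ _ _).trans (le_crossTrafficDelay ha (hc n).1),
    crossTrafficDelay_le ha (hc n).2⟩

theorem delay_le_and_elapsed_nonneg (hq : IsQueue δ τ s c routed e d)
    (hc : ∀ n, c (n + 1) ∈ Set.Icc 0 1) (hs : ∀ n, δ ≤ s (n + 1)) (hδ : 0 ≤ δ) (hδτ : δ ≤ τ)
    {t : ℕ} (hd : d t ≤ τ) (he : 0 ≤ e t) {u : ℕ} (htu : t ≤ u) : d u ≤ τ ∧ 0 ≤ e u := by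
  induction u, htu using Nat.le_induction with
  | base => exact ⟨hd, he⟩
  | succ n _ ih =>
    by_cases hn : routed (n + 1)
    · exact ⟨(hq.delay_bounds_of_routed hc hs hδτ hn ih.1 ih.2).2, (hq.reset n hn).ge⟩
    · rw [hq.hold n hn, hq.accumulate n hn]
      exact ⟨ih.1, add_nonneg ih.2 (hδ.trans (hs n))⟩

theorem departure_succ_of_not_routed (hq : IsQueue δ τ s c routed e d) {n : ℕ}
    (hn : ¬ routed (n + 1)) : departure s e d (n + 1) = departure s e d n := by
  simp only [departure, sendTime_succ, hq.hold n hn, hq.accumulate n hn]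
  ring

theorem departure_add_le_succ_of_routed (hq : IsQueue δ τ s c routed e d)
    (hc : ∀ n, c (n + 1) ∈ Set.Icc 0 1) (hs : ∀ n, δ ≤ s (n + 1)) (hδτ : δ ≤ τ) {n : ℕ}
    (hn : routed (n + 1)) (hd : d n ≤ τ) (he : 0 ≤ e n) :
    departure s e d n + δ ≤ departure s e d (n + 1) := by
  have := (hq.delay_bounds_of_routed hc hs hδτ hn hd he).1
  simp only [departure, sendTime_succ, hq.reset n hn]
  linarith

theorem departure_add_le (hq : IsQueue δ τ s c routed e d) (hc : ∀ n, c (n + 1) ∈ Set.Icc 0 1)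
    (hs : ∀ n, δ ≤ s (n + 1)) (hδ : 0 ≤ δ) (hδτ : δ ≤ τ) {t t' : ℕ} (htt' : t < t')
    (ht' : routed t') (hd : d t ≤ τ) (he : 0 ≤ e t) :
    departure s e d t + δ ≤ departure s e d t' := by
  obtain ⟨n, rfl⟩ : ∃ n, t' = n + 1 := Nat.exists_eq_add_one_of_ne_zero (by omega)
  have hinv := fun u (hu : t ≤ u) => hq.delay_le_and_elapsed_nonneg hc hs hδ hδτ hd he hu
  have hmono : MonotoneOn (departure s e d) (Set.Ici t) := by
    refine monotoneOn_nat_Ici_of_le_succ fun u hu => ?_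
    by_cases hu' : routed (u + 1)
    · have := hq.departure_add_le_succ_of_routed hc hs hδτ hu' (hinv u hu).1 (hinv u hu).2
      linarith
    · exact (hq.departure_succ_of_not_routed hu').ge
  have hn : t ≤ n := by omega
  calc departure s e d t + δ ≤ departure s e d n + δ := by
        gcongr; exact hmono Set.self_mem_Ici hn hn
    _ ≤ departure s e d (n + 1) :=
      hq.departure_add_le_succ_of_routed hc hs hδτ ht' (hinv n hn).1 (hinv n hn).2

end IsQueue

end RBU

open RBU in
theorem rbu_multipath_same_queue_in_order_delivery_general
    (dtrans τq : ℕ → ℝ) (d_prop : ℝ)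
    (hdtrans : ∀ k, 0 < dtrans k)
    (s c : ℕ → ℝ) (r : ℕ → ℕ)
    (sq aq dq : ℕ → ℕ → ℝ) (T y : ℕ → ℝ)
    (haq : ∀ t, 1 ≤ t →
      aq (r t) t = dtrans (r t) + max (dq (r t) (t - 1) - (sq (r t) (t - 1) + s t)) 0)
    (hdq : ∀ t, 1 ≤ t →
      dq (r t) t = aq (r t) t + c t * (τq (r t) - aq (r t) t))
    (hsq_reset : ∀ t, 1 ≤ t → sq (r t) t = 0)
    (hsq_other : ∀ t, 1 ≤ t → ∀ k, k ≠ r t → sq k t = sq k (t - 1) + s t)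
    (hdq_other : ∀ t, 1 ≤ t → ∀ k, k ≠ r t → dq k t = dq k (t - 1))
    (hT : ∀ t, T t = ∑ i ∈ Finset.Icc 1 t, s i)
    (hy : ∀ t, 1 ≤ t → y t = dq (r t) t + d_prop)
    (k : ℕ)
    (hc : ∀ u, 1 ≤ u → c u ∈ Set.Icc (0 : ℝ) 1)
    (hs_trans : ∀ u, 1 ≤ u → dtrans k ≤ s u)
    (hτ_trans : dtrans k ≤ τq k)
    (t t' : ℕ) (ht : 1 ≤ t) (htt' : t < t')
    (hrt : r t = k) (hrt' : r t' = k)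
    (hnodrop : dq k t ≤ τq k) :
    T t + y t < T t' + y t' := by
  obtain rfl : T = sendTime s := funext hT
  have hδ := hdtrans k
  have hq : IsQueue (dtrans k) (τq k) s c (r · = k) (sq k) (dq k) := by
    refine ⟨fun n hn => ?_, fun n hn => ?_, fun n hn => ?_, fun n hn => ?_⟩
    · simpa [hn] using hsq_reset (n + 1) n.succ_pos
    · obtain rfl : r (n + 1) = k := hn
      rw [hdq _ n.succ_pos, haq _ n.succ_pos]
      rfl
    · simpa using hsq_other (n + 1) n.succ_pos k (Ne.symm hn)
    · simpa using hdq_other (n + 1) n.succ_pos k (Ne.symm hn)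
  have ht' : 1 ≤ t' := ht.trans htt'.le
  have hsq_t : sq k t = 0 := hrt ▸ hsq_reset t ht
  have hdep := hq.departure_add_le (fun n => hc (n + 1) n.succ_pos)
    (fun n => hs_trans (n + 1) n.succ_pos) hδ.le hτ_trans htt' hrt' hnodrop hsq_t.ge
  simp only [departure, hsq_t, hrt' ▸ hsq_reset t' ht'] at hdep
  rw [hy t ht, hy t' ht', hrt, hrt']
  linarith

/-- **Multi-path RBU, in-order delivery within a queue.**
There are `K ≥ 1` queues, queue `k` having transmission delay `dtrans k > 0`
and buffer capacity `τq k > 0`; `r t` is the queue of packet `t`. Per-queue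
elapsed times `sq` accumulate the spacings `s` and reset to `0` on the routed
queue; the routed queue's delay is updated by the RBU recurrence while other
queues' delays are held. For a fixed queue `k`, assume `c u ∈ [0,1]` and
`s u ≥ dtrans k` for all `u ≥ 1`, and `dtrans k ≤ τq k`. Then for packets
`t < t'` both routed through `k`, if `dq k t ≤ τq k` (packet `t` not dropped),
the receiver arrival times satisfy `T t + y t < T t' + y t'`. -/
theorem rbu_multipath_same_queue_in_order_delivery
    (K : ℕ) (hK : 1 ≤ K)
    (dtrans τq : ℕ → ℝ) (d_prop : ℝ)
    (hdtrans : ∀ k, 0 < dtrans k) (hτq : ∀ k, 0 < τq k) (hdprop : 0 < d_prop)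
    (s c : ℕ → ℝ) (r : ℕ → ℕ)
    (hs_pos : ∀ t, 1 ≤ t → 0 < s t)
    (hr : ∀ t, 1 ≤ t → r t ∈ Finset.Icc 1 K)
    (sq aq dq : ℕ → ℕ → ℝ) (T y : ℕ → ℝ)
    (hsq0 : ∀ k, sq k 0 = 0)
    (haq : ∀ t, 1 ≤ t →
      aq (r t) t = dtrans (r t) + max (dq (r t) (t - 1) - (sq (r t) (t - 1) + s t)) 0)
    (hdq : ∀ t, 1 ≤ t →
      dq (r t) t = aq (r t) t + c t * (τq (r t) - aq (r t) t))
    (hsq_reset : ∀ t, 1 ≤ t → sq (r t) t = 0)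
    (hsq_other : ∀ t, 1 ≤ t → ∀ k, k ≠ r t → sq k t = sq k (t - 1) + s t)
    (hdq_other : ∀ t, 1 ≤ t → ∀ k, k ≠ r t → dq k t = dq k (t - 1))
    (hT : ∀ t, T t = ∑ i ∈ Finset.Icc 1 t, s i)
    (hy : ∀ t, 1 ≤ t → y t = dq (r t) t + d_prop)
    (k : ℕ)
    (hc : ∀ u, 1 ≤ u → c u ∈ Set.Icc (0 : ℝ) 1)
    (hs_trans : ∀ u, 1 ≤ u → dtrans k ≤ s u)
    (hτ_trans : dtrans k ≤ τq k)
    (t t' : ℕ) (ht : 1 ≤ t) (htt' : t < t')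
    (hrt : r t = k) (hrt' : r t' = k)
    (hnodrop : dq k t ≤ τq k) :
    T t + y t < T t' + y t' :=
  rbu_multipath_same_queue_in_order_delivery_general dtrans τq d_prop hdtrans s c r sq aq dq T y haq
    hdq hsq_reset hsq_other hdq_other hT hy k hc hs_trans hτ_trans t t' ht htt' hrt hrt' hnodrop
end
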